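/- The one-point suspension Susp₁(v,K) is vertex-decomposable if and only if K is vertex-decomposable. -/
import Mathlib


open Finset

variable {V : Type} [DecidableEq V]

/-- `K` (a finite set of finite sets) is an abstract simplicial complex:
it contains the empty face and is closed under taking subsets. -/
def IsComplex (K : Finset (Finset V)) : Prop :=
  ∅ ∈ K ∧ ∀ s ∈ K, ∀ t ⊆ s, t ∈ K

/-- The facets (maximal faces) of `K`. -/
def facetsOf (K : Finset (Finset V)) : Finset (Finset V) :=
  K.filter fun s => ∀ t ∈ K, s ⊆ t → s = t

/-- The vertex set of `K`. -/
def vertsOf (K : Finset (Finset V)) : Finset V := K.sup id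

/-- The link of the vertex `v` in `K`. -/
def linkOf (K : Finset (Finset V)) (v : V) : Finset (Finset V) :=
  (K.filter fun s => v ∈ s).image fun s => s.erase v

/-- The deletion of the vertex `v` from `K`. -/
def delOf (K : Finset (Finset V)) (v : V) : Finset (Finset V) :=
  K.filter fun s => v ∉ s

/-- The star of the vertex `v` in `K`. -/
def starOf (K : Finset (Finset V)) (v : V) : Finset (Finset V) :=
  K.filter fun s => v ∈ s

/-- Join of two face sets. -/
def joinF (K L : Finset (Finset V)) : Finset (Finset V) :=
  (K ×ˢ L).image fun p => p.1 ∪ p.2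

/-- Image of a complex under a vertex map. -/
def mapC {W : Type} [DecidableEq W] (f : V → W) (K : Finset (Finset V)) :
    Finset (Finset W) :=
  K.image (Finset.image f)

/-- The full edge `{v', v''}` on the two new vertices `v' = Sum.inr false`,
`v'' = Sum.inr true`, as a simplicial complex. -/
def edgeC (V : Type) [DecidableEq V] : Finset (Finset (V ⊕ Bool)) :=
  ({Sum.inr false, Sum.inr true} : Finset (V ⊕ Bool)).powerset

/-- The boundary of the edge `{v', v''}`. -/
def bedgeC (V : Type) [DecidableEq V] : Finset (Finset (V ⊕ Bool)) :=
  (edgeC V).erase {Sum.inr false, Sum.inr true}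

/-- The one-point suspension of `K` at the vertex `v`:
`((∂e ∗ K) ∖ (∂e ∗ star_K(v))) ∪ (e ∗ link_K(v))` where `e = {v',v''}`. -/
def susp (v : V) (K : Finset (Finset V)) : Finset (Finset (V ⊕ Bool)) :=
  (joinF (bedgeC V) (mapC Sum.inl K) \ joinF (bedgeC V) (mapC Sum.inl (starOf K v))) ∪
    joinF (edgeC V) (mapC Sum.inl (linkOf K v))

/-- `L` is pure: all its facets have the same cardinality. -/
def PureC {W : Type} [DecidableEq W] (L : Finset (Finset W)) : Prop :=
  ∀ s ∈ facetsOf L, ∀ t ∈ facetsOf L, s.card = t.card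

/-- A pure simplicial complex is vertex-decomposable if it is a simplex (possibly `{∅}`),
or there is a vertex `v` such that the link and the deletion of `v` are both pure and
vertex-decomposable. -/
inductive VertexDecomposable {W : Type} [DecidableEq W] : Finset (Finset W) → Prop
  | simplex (S : Finset W) : VertexDecomposable S.powerset
  | step (K : Finset (Finset W)) (v : W) (hv : {v} ∈ K)
      (hlp : PureC (linkOf K v)) (hdp : PureC (delOf K v))
      (hl : VertexDecomposable (linkOf K v)) (hd : VertexDecomposable (delOf K v)) :
      VertexDecomposable K


/-! ### Auxiliary definitions -/

set_option linter.unusedSectionVars false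

section Aux

variable {W : Type} [DecidableEq W]

/-- the left part of a finset of a sum type -/
def lpart (s : Finset (V ⊕ Bool)) : Finset V :=
  s.filterMap Sum.getLeft? (by
    intro a a' b h h'
    cases a <;> cases a' <;> simp_all)

/-- the right part of a finset of a sum type -/
def rpart (s : Finset (V ⊕ Bool)) : Finset (V ⊕ Bool) :=
  s.filter (fun x => x.isRight)

/-- the full edge -/
def eF (V : Type) [DecidableEq V] : Finset (V ⊕ Bool) := {Sum.inr false, Sum.inr true}

@[simp] lemma mem_lpart {s : Finset (V ⊕ Bool)} {a : V} :
    a ∈ lpart s ↔ Sum.inl a ∈ s := by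
  simp only [lpart, Finset.mem_filterMap]
  constructor
  · rintro ⟨x, hx, hx'⟩; cases x <;> simp_all
  · intro h; exact ⟨Sum.inl a, h, rfl⟩

@[simp] lemma mem_rpart {s : Finset (V ⊕ Bool)} {x : V ⊕ Bool} :
    x ∈ rpart s ↔ x ∈ s ∧ x.isRight := by simp [rpart]

@[simp] lemma inr_mem_rpart {s : Finset (V ⊕ Bool)} {b : Bool} :
    Sum.inr b ∈ rpart s ↔ Sum.inr b ∈ s := by simp

@[simp] lemma inl_notMem_rpart {s : Finset (V ⊕ Bool)} {a : V} :
    Sum.inl a ∉ rpart s := by simp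

@[simp] lemma lpart_union {s t : Finset (V ⊕ Bool)} :
    lpart (s ∪ t) = lpart s ∪ lpart t := by ext a; simp

@[simp] lemma rpart_union {s t : Finset (V ⊕ Bool)} :
    rpart (s ∪ t) = rpart s ∪ rpart t := by ext a; simp [or_and_right]

@[simp] lemma lpart_insert_inl {s : Finset (V ⊕ Bool)} {a : V} :
    lpart (insert (Sum.inl a) s) = insert a (lpart s) := by ext x; simp

@[simp] lemma lpart_insert_inr {s : Finset (V ⊕ Bool)} {b : Bool} :
    lpart (insert (Sum.inr b) s) = lpart s := by ext x; simp

@[simp] lemma rpart_insert_inl {s : Finset (V ⊕ Bool)} {a : V} :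
    rpart (insert (Sum.inl a) s) = rpart s := by
  ext x; simp only [mem_rpart, Finset.mem_insert]
  constructor
  · rintro ⟨h | h, h2⟩ <;> simp_all
  · rintro ⟨h, h2⟩; exact ⟨Or.inr h, h2⟩

@[simp] lemma rpart_insert_inr {s : Finset (V ⊕ Bool)} {b : Bool} :
    rpart (insert (Sum.inr b) s) = insert (Sum.inr b) (rpart s) := by
  ext x; simp only [mem_rpart, Finset.mem_insert]
  constructor
  · rintro ⟨h | h, h2⟩ <;> simp_all
  · rintro (h | ⟨h, h2⟩) <;> simp_all

@[simp] lemma lpart_image_inl {F : Finset V} : lpart (F.image Sum.inl) = F := by ext; simp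

@[simp] lemma rpart_image_inl {F : Finset V} : rpart (F.image Sum.inl) = ∅ := by
  ext x; simp only [mem_rpart, Finset.mem_image, Finset.notMem_empty, iff_false]
  rintro ⟨⟨a, _, rfl⟩, h⟩; simp at h

@[simp] lemma lpart_empty : lpart (∅ : Finset (V ⊕ Bool)) = ∅ := by ext; simp

@[simp] lemma rpart_empty : rpart (∅ : Finset (V ⊕ Bool)) = ∅ := by ext; simp

@[simp] lemma lpart_eF : lpart (eF V) = ∅ := by ext; simp [eF]

@[simp] lemma rpart_eF : rpart (eF V) = eF V := by
  ext x
  simp only [eF, mem_rpart, Finset.mem_insert, Finset.mem_singleton, or_and_right]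
  constructor
  · rintro (⟨rfl,-⟩|⟨rfl,-⟩) <;> simp
  · rintro (rfl|rfl) <;> simp

lemma rpart_union_lpart (s : Finset (V ⊕ Bool)) :
    rpart s ∪ (lpart s).image Sum.inl = s := by
  ext x; cases x <;> simp

lemma rpart_subset_eF (s : Finset (V ⊕ Bool)) : rpart s ⊆ eF V := by
  intro x hx
  simp only [mem_rpart] at hx
  cases x with
  | inl a => simp at hx
  | inr b => cases b <;> simp [eF]

lemma subset_eF_cases {T : Finset (V ⊕ Bool)} (h : T ⊆ eF V) :
    T = ∅ ∨ T = {Sum.inr false} ∨ T = {Sum.inr true} ∨ T = eF V := by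
  have := Finset.subset_iff.mp h
  by_cases h1 : Sum.inr false ∈ T <;> by_cases h2 : Sum.inr true ∈ T
  · right; right; right
    apply Finset.Subset.antisymm h
    intro x hx; simp [eF] at hx; rcases hx with rfl | rfl <;> assumption
  · right; left
    ext x; simp only [Finset.mem_singleton]
    constructor
    · intro hx; have := this hx; simp [eF] at this
      rcases this with rfl | rfl; rfl; exact absurd hx h2
    · rintro rfl; exact h1
  · right; right; left
    ext x; simp only [Finset.mem_singleton]
    constructor
    · intro hx; have := this hx; simp [eF] at this
      rcases this with rfl | rfl
      · exact absurd hx h1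
      · rfl
    · rintro rfl; exact h2
  · left
    ext x
    simp only [Finset.notMem_empty, iff_false]
    intro hx; have := this hx; simp [eF] at this
    rcases this with rfl | rfl <;> [exact h1 hx; exact h2 hx]

end Aux

section MemLemmas

variable {W : Type} [DecidableEq W]

lemma mem_facetsOf {K : Finset (Finset W)} {s : Finset W} :
    s ∈ facetsOf K ↔ s ∈ K ∧ ∀ t ∈ K, s ⊆ t → s = t := by simp [facetsOf]

lemma mem_delOf {K : Finset (Finset W)} {v : W} {s : Finset W} :
    s ∈ delOf K v ↔ s ∈ K ∧ v ∉ s := by simp [delOf]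

lemma mem_linkOf {K : Finset (Finset W)} {v : W} {s : Finset W} :
    s ∈ linkOf K v ↔ ∃ t ∈ K, v ∈ t ∧ s = t.erase v := by
  simp only [linkOf, Finset.mem_image, Finset.mem_filter]
  constructor
  · rintro ⟨t, ⟨ht, hv⟩, rfl⟩; exact ⟨t, ht, hv, rfl⟩
  · rintro ⟨t, ht, hv, rfl⟩; exact ⟨t, ⟨ht, hv⟩, rfl⟩

lemma mem_linkOf' {K : Finset (Finset W)} (hK : IsComplex K) {v : W} {s : Finset W} :
    s ∈ linkOf K v ↔ v ∉ s ∧ insert v s ∈ K := by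
  rw [mem_linkOf]
  constructor
  · rintro ⟨t, ht, hv, rfl⟩
    refine ⟨Finset.notMem_erase _ _, ?_⟩
    rwa [Finset.insert_erase hv]
  · rintro ⟨hv, ht⟩
    exact ⟨insert v s, ht, Finset.mem_insert_self _ _, by rw [Finset.erase_insert hv]⟩

lemma mem_joinF {A B : Finset (Finset W)} {s : Finset W} :
    s ∈ joinF A B ↔ ∃ a ∈ A, ∃ b ∈ B, s = a ∪ b := by
  simp only [joinF, Finset.mem_image, Finset.mem_product, Prod.exists]
  constructor
  · rintro ⟨a, b, ⟨ha, hb⟩, rfl⟩; exact ⟨a, ha, b, hb, rfl⟩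
  · rintro ⟨a, ha, b, hb, rfl⟩; exact ⟨a, b, ⟨ha, hb⟩, rfl⟩

lemma mem_mapC {W' : Type} [DecidableEq W'] {f : W → W'} {K : Finset (Finset W)}
    {s : Finset W'} : s ∈ mapC f K ↔ ∃ t ∈ K, s = t.image f := by
  simp only [mapC, Finset.mem_image]
  exact ⟨fun ⟨t, ht, h⟩ => ⟨t, ht, h.symm⟩, fun ⟨t, ht, h⟩ => ⟨t, ht, h.symm⟩⟩

lemma mem_edgeC {s : Finset (V ⊕ Bool)} : s ∈ edgeC V ↔ s ⊆ eF V := by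
  simp [edgeC, eF]

lemma mem_bedgeC {s : Finset (V ⊕ Bool)} : s ∈ bedgeC V ↔ s ⊆ eF V ∧ s ≠ eF V := by
  simp [bedgeC, edgeC, eF, and_comm]

lemma linkOf_subset {K : Finset (Finset W)} (hK : IsComplex K) {v : W} :
    ∀ s ∈ linkOf K v, s ∈ K ∧ v ∉ s := by
  intro s hs
  rw [mem_linkOf' hK] at hs
  exact ⟨hK.2 _ hs.2 _ (Finset.subset_insert _ _), hs.1⟩

lemma isComplex_linkOf {K : Finset (Finset W)} (hK : IsComplex K) {v : W}
    (hv : {v} ∈ K) : IsComplex (linkOf K v) := by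
  constructor
  · rw [mem_linkOf' hK]
    constructor
    · simp
    · simpa using hv
  · intro s hs t hts
    rw [mem_linkOf' hK] at hs ⊢
    exact ⟨fun hv => hs.1 (hts hv), hK.2 _ hs.2 _ (Finset.insert_subset_insert _ hts)⟩

lemma isComplex_delOf {K : Finset (Finset W)} (hK : IsComplex K) (v : W) :
    IsComplex (delOf K v) := by
  constructor
  · rw [mem_delOf]; exact ⟨hK.1, by simp⟩
  · intro s hs t hts
    rw [mem_delOf] at hs ⊢
    exact ⟨hK.2 _ hs.1 _ hts, fun hv => hs.2 (hts hv)⟩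

lemma isComplex_powerset (S : Finset W) : IsComplex S.powerset := by
  constructor
  · simp
  · intro s hs t hts
    simp only [Finset.mem_powerset] at *
    exact hts.trans hs

/-- The membership criterion for the one-point suspension. -/
lemma mem_susp {K : Finset (Finset V)} (hK : IsComplex K) {v : V} {s : Finset (V ⊕ Bool)} :
    s ∈ susp v K ↔
      (rpart s = eF V ∧ lpart s ∈ linkOf K v) ∨
        (rpart s ≠ eF V ∧ lpart s ∈ K ∧ v ∉ lpart s) := by
  constructor
  · intro hs
    rw [susp, Finset.mem_union, Finset.mem_sdiff] at hs
    rcases hs with ⟨h1, h2⟩ | h1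
    · -- s = T ∪ ι F with T ∈ bedge, F ∈ K, and v ∉ F (else it is in the star join)
      rw [mem_joinF] at h1
      obtain ⟨T, hT, b, hb, rfl⟩ := h1
      rw [mem_mapC] at hb
      obtain ⟨F, hF, rfl⟩ := hb
      rw [mem_bedgeC] at hT
      have hrT : rpart T = T := by
        ext x; simp only [mem_rpart, and_iff_left_iff_imp]
        intro hx; have := hT.1 hx; simp [eF] at this
        rcases this with rfl | rfl <;> rfl
      have hvF : v ∉ F := by
        intro hvF
        apply h2
        rw [mem_joinF]
        exact ⟨T, by rw [mem_bedgeC]; exact hT, F.image Sum.inl,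
          by rw [mem_mapC]; exact ⟨F, by simp [starOf, hF, hvF], rfl⟩, rfl⟩
      right
      simp only [rpart_union, lpart_union, hrT, lpart_image_inl, rpart_image_inl,
        Finset.union_empty]
      have hlT : lpart T = ∅ := by
        ext x; simp only [mem_lpart, Finset.notMem_empty, iff_false]
        intro hx; have := hT.1 hx; simp [eF] at this
      rw [hlT]
      simp only [Finset.empty_union]
      exact ⟨hT.2, hF, hvF⟩
    · rw [mem_joinF] at h1
      obtain ⟨T, hT, b, hb, rfl⟩ := h1
      rw [mem_mapC] at hb
      obtain ⟨G, hG, rfl⟩ := hb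
      rw [mem_edgeC] at hT
      have hrT : rpart T = T := by
        ext x; simp only [mem_rpart, and_iff_left_iff_imp]
        intro hx; have := hT hx; simp [eF] at this
        rcases this with rfl | rfl <;> rfl
      have hlT : lpart T = ∅ := by
        ext x; simp only [mem_lpart, Finset.notMem_empty, iff_false]
        intro hx; have := hT hx; simp [eF] at this
      simp only [rpart_union, lpart_union, hrT, lpart_image_inl, rpart_image_inl,
        Finset.union_empty, hlT, Finset.empty_union]
      by_cases hTe : T = eF V
      · left; exact ⟨by rw [hTe], hG⟩
      · right
        refine ⟨hTe, (linkOf_subset hK _ hG).1, (linkOf_subset hK _ hG).2⟩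
  · intro hs
    rw [susp, Finset.mem_union, Finset.mem_sdiff]
    rcases hs with ⟨hr, hl⟩ | ⟨hr, hlK, hlv⟩
    · right
      rw [mem_joinF]
      exact ⟨rpart s, by rw [mem_edgeC]; exact rpart_subset_eF s, (lpart s).image Sum.inl,
        by rw [mem_mapC]; exact ⟨lpart s, hl, rfl⟩, (rpart_union_lpart s).symm⟩
    · left
      constructor
      · rw [mem_joinF]
        exact ⟨rpart s, by rw [mem_bedgeC]; exact ⟨rpart_subset_eF s, hr⟩,
          (lpart s).image Sum.inl, by rw [mem_mapC]; exact ⟨lpart s, hlK, rfl⟩,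
          (rpart_union_lpart s).symm⟩
      · intro hmem
        rw [mem_joinF] at hmem
        obtain ⟨T, hT, b, hb, hs_eq⟩ := hmem
        rw [mem_mapC] at hb
        obtain ⟨F, hF, rfl⟩ := hb
        rw [mem_bedgeC] at hT
        simp only [starOf, Finset.mem_filter] at hF
        apply hlv
        have : lpart s = F := by
          rw [hs_eq]
          simp only [lpart_union, lpart_image_inl]
          have hlT : lpart T = ∅ := by
            ext x; simp only [mem_lpart, Finset.notMem_empty, iff_false]
            intro hx; have := hT.1 hx; simp [eF] at this
          rw [hlT, Finset.empty_union]
        rw [this]; exact hF.2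

end MemLemmas

section SuspLemmas

variable {K : Finset (Finset V)} {v : V}

lemma eF_card : (eF V).card = 2 := by simp [eF]

lemma singleton_ne_eF (x : V ⊕ Bool) : ({x} : Finset (V ⊕ Bool)) ≠ eF V := by
  intro h
  have := congrArg Finset.card h
  rw [eF_card] at this
  simp at this

lemma empty_ne_eF : (∅ : Finset (V ⊕ Bool)) ≠ eF V := by
  intro h
  have := congrArg Finset.card h
  rw [eF_card] at this
  simp at this

lemma insert_inr_eq_eF (b : Bool) :
    insert (Sum.inr b) ({Sum.inr (!b)} : Finset (V ⊕ Bool)) = eF V := by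
  cases b <;> (ext x; simp only [eF, Finset.mem_insert, Finset.mem_singleton]; tauto)

lemma isComplex_susp (hK : IsComplex K) : IsComplex (susp v K) := by
  constructor
  · rw [mem_susp hK]
    right
    simp [empty_ne_eF, hK.1]
  · intro s hs t hts
    rw [mem_susp hK] at hs ⊢
    have hlsub : lpart t ⊆ lpart s := by
      intro x hx; rw [mem_lpart] at hx ⊢; exact hts hx
    have hrsub : rpart t ⊆ rpart s := by
      intro x hx; rw [mem_rpart] at hx ⊢; exact ⟨hts hx.1, hx.2⟩
    rcases hs with ⟨hr, hl⟩ | ⟨hr, hlK, hlv⟩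
    · rw [mem_linkOf' hK] at hl
      have hlt : lpart t ∈ K := hK.2 _ hl.2 _ (hlsub.trans (Finset.subset_insert _ _))
      have hvt : v ∉ lpart t := fun h => hl.1 (hlsub h)
      by_cases hrt : rpart t = eF V
      · left
        refine ⟨hrt, ?_⟩
        rw [mem_linkOf' hK]
        exact ⟨hvt, hK.2 _ hl.2 _ (Finset.insert_subset_insert _ hlsub)⟩
      · right; exact ⟨hrt, hlt, hvt⟩
    · by_cases hrt : rpart t = eF V
      · exfalso
        apply hr
        exact Finset.Subset.antisymm (rpart_subset_eF s) (hrt ▸ hrsub)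
      · right
        exact ⟨hrt, hK.2 _ hlK _ hlsub, fun h => hlv (hlsub h)⟩

/-- link of the suspension at an original vertex. -/
lemma linkOf_susp_inl (hK : IsComplex K) {w : V} (hw : {w} ∈ K) (hwv : w ≠ v) :
    linkOf (susp v K) (Sum.inl w) = susp v (linkOf K w) := by
  have hKl := isComplex_linkOf hK hw
  have hvw : v ≠ w := fun h => hwv h.symm
  ext s
  simp only [mem_linkOf' (isComplex_susp hK), mem_susp hK, mem_susp hKl,
    mem_linkOf' hKl, mem_linkOf' hK, mem_delOf, lpart_insert_inl, rpart_insert_inl,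
    ← mem_lpart, Finset.mem_insert, Finset.insert_comm v w]
  tauto

/-- deletion in the suspension at an original vertex. -/
lemma delOf_susp_inl (hK : IsComplex K) {w : V} (hw : {w} ∈ K) (hwv : w ≠ v) :
    delOf (susp v K) (Sum.inl w) = susp v (delOf K w) := by
  have hKd := isComplex_delOf hK w
  have hvw : v ≠ w := fun h => hwv h.symm
  ext s
  simp only [mem_delOf, mem_susp hK, mem_susp hKd, mem_linkOf' hKd, mem_linkOf' hK,
    mem_delOf, ← mem_lpart, Finset.mem_insert]
  tauto

end SuspLemmas

section SuspLemmas2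

variable {K : Finset (Finset V)} {v : V}

/-- the folding map -/
def fb (v : V) (b : Bool) : V → V ⊕ Bool := fun x => if x = v then Sum.inr (!b) else Sum.inl x

lemma fb_injective (v : V) (b : Bool) : Function.Injective (fb v b) := by
  intro x y hxy
  unfold fb at hxy
  by_cases hx : x = v <;> by_cases hy : y = v <;> simp [hx, hy] at hxy <;> simp [hx, hy, hxy]

lemma image_fb_of_notMem {F : Finset V} {b : Bool} (h : v ∉ F) :
    F.image (fb v b) = F.image Sum.inl := by
  apply Finset.image_congr
  intro x hx
  have : x ≠ v := fun hxv => h (hxv ▸ hx)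
  simp [fb, this]

lemma image_fb_of_mem {F : Finset V} {b : Bool} (h : v ∈ F) :
    F.image (fb v b) = insert (Sum.inr (!b)) ((F.erase v).image Sum.inl) := by
  conv_lhs => rw [← Finset.insert_erase h]
  rw [Finset.image_insert, image_fb_of_notMem (Finset.notMem_erase _ _)]
  simp [fb]

/-- link of the suspension at a suspension vertex. -/
lemma linkOf_susp_inr (hK : IsComplex K) (b : Bool) :
    linkOf (susp v K) (Sum.inr b) = mapC (fb v b) K := by
  ext s
  rw [mem_linkOf' (isComplex_susp hK), mem_susp hK, mem_mapC]
  constructor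
  · rintro ⟨hbs, h⟩
    simp only [lpart_insert_inr, rpart_insert_inr] at h
    rcases h with ⟨hre, hl⟩ | ⟨hre, hlK, hlv⟩
    · rw [mem_linkOf' hK] at hl
      refine ⟨insert v (lpart s), hl.2, ?_⟩
      rw [image_fb_of_mem (Finset.mem_insert_self _ _), Finset.erase_insert hl.1]
      have hrs : rpart s = {Sum.inr (!b)} := by
        have h1 : rpart s ⊆ eF V := rpart_subset_eF s
        have h2 : Sum.inr b ∉ rpart s := by simp [hbs]
        have h3 : Sum.inr (!b) ∈ rpart s := by
          have : Sum.inr (!b) ∈ insert (Sum.inr b) (rpart s) := by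
            rw [hre]; cases b <;> simp [eF]
          simp only [Finset.mem_insert] at this
          rcases this with h | h
          · exfalso; cases b <;> simp_all
          · exact h
        apply Finset.Subset.antisymm
        · intro x hx
          have := h1 hx
          simp only [eF, Finset.mem_insert, Finset.mem_singleton] at this
          rcases this with rfl | rfl <;> simp only [Finset.mem_singleton]
          · cases b
            · exact absurd hx h2
            · rfl
          · cases b
            · rfl
            · exact absurd hx h2
        · simp [h3]
      conv_lhs => rw [← rpart_union_lpart s, hrs]
      ext x; simp
    · -- rpart s must be empty
      have hrs : rpart s = ∅ := by
        by_contra hne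
        obtain ⟨x, hx⟩ := Finset.nonempty_iff_ne_empty.mpr hne
        have hxe := rpart_subset_eF s hx
        simp only [eF, Finset.mem_insert, Finset.mem_singleton] at hxe
        have hxb : x ≠ Sum.inr b := by
          rintro rfl; exact hbs (mem_rpart.mp hx).1
        have hxnb : x = Sum.inr (!b) := by
          rcases hxe with rfl | rfl <;> cases b <;> simp_all
        apply hre
        apply Finset.Subset.antisymm
        · intro y hy
          simp only [Finset.mem_insert] at hy
          rcases hy with rfl | hy
          · cases b <;> simp [eF]
          · have := rpart_subset_eF s hy
            simp only [eF, Finset.mem_insert, Finset.mem_singleton] at this ⊢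
            tauto
        · intro y hy
          simp only [eF, Finset.mem_insert, Finset.mem_singleton] at hy
          simp only [Finset.mem_insert]
          rcases hy with rfl | rfl
          · cases b
            · left; rfl
            · simp only [Bool.not_true] at hxnb; right; rwa [← hxnb]
          · cases b
            · simp only [Bool.not_false] at hxnb; right; rwa [← hxnb]
            · left; rfl
      refine ⟨lpart s, hlK, ?_⟩
      rw [image_fb_of_notMem hlv]
      conv_lhs => rw [← rpart_union_lpart s, hrs]
      simp
  · rintro ⟨F, hF, rfl⟩
    by_cases hvF : v ∈ F
    · rw [image_fb_of_mem hvF]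
      constructor
      · simp only [Finset.mem_insert]
        rintro (h | h)
        · cases b <;> simp_all
        · simp only [Finset.mem_image] at h; obtain ⟨a, _, h⟩ := h; simp at h
      · left
        simp only [rpart_insert_inr, lpart_insert_inr, lpart_insert_inl, lpart_image_inl,
          rpart_insert_inl, rpart_image_inl]
        constructor
        · cases b <;> ext x <;> simp only [eF, Finset.mem_insert, Finset.mem_singleton,
            Finset.notMem_empty, or_false, Bool.not_true, Bool.not_false] <;> tauto
        · rw [mem_linkOf' hK]
          exact ⟨Finset.notMem_erase _ _, by rwa [Finset.insert_erase hvF]⟩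
    · rw [image_fb_of_notMem hvF]
      constructor
      · simp only [Finset.mem_image]
        rintro ⟨a, _, h⟩; simp at h
      · right
        simp only [rpart_insert_inr, lpart_insert_inr, rpart_image_inl, lpart_image_inl]
        refine ⟨?_, hF, hvF⟩
        intro h
        have : Sum.inr (!b) ∈ insert (Sum.inr b) (∅ : Finset (V ⊕ Bool)) := by
          rw [h]; cases b <;> simp [eF]
        simp only [Finset.mem_insert, Finset.notMem_empty, or_false] at this
        cases b <;> simp_all

/-- cone over a complex -/
def coneOf {W : Type} [DecidableEq W] (a : W) (L : Finset (Finset W)) : Finset (Finset W) :=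
  L ∪ L.image (insert a)

lemma mem_coneOf {W : Type} [DecidableEq W] {a : W} {L : Finset (Finset W)} {s : Finset W} :
    s ∈ coneOf a L ↔ s ∈ L ∨ ∃ t ∈ L, s = insert a t := by
  simp only [coneOf, Finset.mem_union, Finset.mem_image]
  constructor
  · rintro (h | ⟨t, ht, rfl⟩)
    · exact Or.inl h
    · exact Or.inr ⟨t, ht, rfl⟩
  · rintro (h | ⟨t, ht, rfl⟩)
    · exact Or.inl h
    · exact Or.inr ⟨t, ht, rfl⟩

/-- deletion of the suspension at a suspension vertex. -/
lemma delOf_susp_inr (hK : IsComplex K) (b : Bool) :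
    delOf (susp v K) (Sum.inr b) = coneOf (Sum.inr (!b)) (mapC Sum.inl (delOf K v)) := by
  ext s
  rw [mem_delOf, mem_susp hK, mem_coneOf]
  simp only [mem_mapC, mem_delOf]
  constructor
  · rintro ⟨(⟨hre, hl⟩ | ⟨hre, hlK, hlv⟩), hbs⟩
    · exfalso
      apply hbs
      have : Sum.inr b ∈ eF V := by cases b <;> simp [eF]
      rw [← hre] at this
      exact (mem_rpart.mp this).1
    · -- rpart s is ∅ or {inr !b}
      have hsub : rpart s ⊆ {Sum.inr (!b)} := by
        intro x hx
        have := rpart_subset_eF s hx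
        simp only [eF, Finset.mem_insert, Finset.mem_singleton] at this
        simp only [Finset.mem_singleton]
        have hxb : x ≠ Sum.inr b := by rintro rfl; exact hbs (mem_rpart.mp hx).1
        rcases this with rfl | rfl <;> cases b <;> simp_all
      rcases Finset.subset_singleton_iff.mp hsub with h0 | h1
      · left
        refine ⟨lpart s, ⟨hlK, hlv⟩, ?_⟩
        conv_lhs => rw [← rpart_union_lpart s, h0]
        simp
      · right
        refine ⟨(lpart s).image Sum.inl, ⟨lpart s, ⟨hlK, hlv⟩, rfl⟩, ?_⟩
        conv_lhs => rw [← rpart_union_lpart s, h1]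
        ext x; simp
  · rintro (⟨F, ⟨hF, hvF⟩, rfl⟩ | ⟨t, ⟨F, ⟨hF, hvF⟩, rfl⟩, rfl⟩)
    · refine ⟨Or.inr ⟨?_, ?_, ?_⟩, ?_⟩
      · rw [rpart_image_inl]; exact empty_ne_eF
      · rwa [lpart_image_inl]
      · rwa [lpart_image_inl]
      · intro h
        simp only [Finset.mem_image] at h
        obtain ⟨a, _, ha⟩ := h
        exact Sum.inl_ne_inr ha
    · refine ⟨Or.inr ⟨?_, ?_, ?_⟩, ?_⟩
      · rw [rpart_insert_inr, rpart_image_inl]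
        have : insert (Sum.inr (!b)) (∅ : Finset (V ⊕ Bool)) = {Sum.inr (!b)} := by simp
        rw [this]
        exact singleton_ne_eF _
      · rw [lpart_insert_inr, lpart_image_inl]; exact hF
      · rw [lpart_insert_inr, lpart_image_inl]; exact hvF
      · intro h
        simp only [Finset.mem_insert, Finset.mem_image] at h
        rcases h with h | ⟨a, _, ha⟩
        · cases b <;> simp_all
        · exact Sum.inl_ne_inr ha

end SuspLemmas2

section ConePow

variable {W : Type} [DecidableEq W]

lemma facetsOf_powerset (S : Finset W) : facetsOf S.powerset = {S} := by
  ext s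
  rw [mem_facetsOf]
  simp only [Finset.mem_powerset, Finset.mem_singleton]
  constructor
  · rintro ⟨h1, h2⟩
    exact h2 S Finset.Subset.rfl h1
  · rintro rfl
    exact ⟨Finset.Subset.rfl, fun t ht hst => Finset.Subset.antisymm hst ht⟩

lemma pureC_powerset (S : Finset W) : PureC S.powerset := by
  intro s hs t ht
  rw [facetsOf_powerset] at hs ht
  simp only [Finset.mem_singleton] at hs ht
  rw [hs, ht]

lemma delOf_powerset (S : Finset W) (v : W) :
    delOf S.powerset v = (S.erase v).powerset := by
  ext s
  rw [mem_delOf]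
  simp only [Finset.mem_powerset]
  constructor
  · rintro ⟨h1, h2⟩
    intro x hx
    exact Finset.mem_erase.mpr ⟨fun h => h2 (h ▸ hx), h1 hx⟩
  · intro h
    exact ⟨h.trans (Finset.erase_subset _ _), fun hv => Finset.notMem_erase v S (h hv)⟩

variable {a : W} {L : Finset (Finset W)}

lemma coneOf_powerset {S : Finset W} (ha : a ∉ S) :
    coneOf a S.powerset = (insert a S).powerset := by
  ext s
  rw [mem_coneOf]
  simp only [Finset.mem_powerset]
  constructor
  · rintro (h | ⟨t, ht, rfl⟩)
    · exact h.trans (Finset.subset_insert a S)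
    · exact Finset.insert_subset_insert a ht
  · intro h
    by_cases has : a ∈ s
    · right
      refine ⟨s.erase a, ?_, (Finset.insert_erase has).symm⟩
      intro x hx
      rcases Finset.mem_erase.mp hx with ⟨hxa, hxs⟩
      rcases Finset.mem_insert.mp (h hxs) with h' | h'
      · exact absurd h' hxa
      · exact h'
    · left
      intro x hx
      rcases Finset.mem_insert.mp (h hx) with h' | h'
      · exact absurd (h' ▸ hx) has
      · exact h'

lemma linkOf_coneOf (ha : ∀ F ∈ L, a ∉ F) : linkOf (coneOf a L) a = L := by
  ext s
  rw [mem_linkOf]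
  constructor
  · rintro ⟨t, ht, hat, rfl⟩
    rcases mem_coneOf.mp ht with h | ⟨u, hu, rfl⟩
    · exact absurd hat (ha _ h)
    · rwa [Finset.erase_insert (ha _ hu)]
  · intro hs
    exact ⟨insert a s, mem_coneOf.mpr (Or.inr ⟨s, hs, rfl⟩), Finset.mem_insert_self _ _,
      (Finset.erase_insert (ha _ hs)).symm⟩

lemma delOf_coneOf (ha : ∀ F ∈ L, a ∉ F) : delOf (coneOf a L) a = L := by
  ext s
  rw [mem_delOf, mem_coneOf]
  constructor
  · rintro ⟨h | ⟨t, ht, rfl⟩, has⟩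
    · exact h
    · exact absurd (Finset.mem_insert_self a t) has
  · intro hs
    exact ⟨Or.inl hs, ha _ hs⟩

lemma mem_facetsOf_coneOf (ha : ∀ F ∈ L, a ∉ F) {s : Finset W} :
    s ∈ facetsOf (coneOf a L) ↔ ∃ t ∈ facetsOf L, s = insert a t := by
  rw [mem_facetsOf]
  constructor
  · rintro ⟨hs, hmax⟩
    rcases mem_coneOf.mp hs with h | ⟨t, ht, rfl⟩
    · exfalso
      have : s = insert a s :=
        hmax _ (mem_coneOf.mpr (Or.inr ⟨s, h, rfl⟩)) (Finset.subset_insert _ _)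
      exact ha _ h (this ▸ Finset.mem_insert_self a s)
    · refine ⟨t, mem_facetsOf.mpr ⟨ht, ?_⟩, rfl⟩
      intro u hu htu
      have := hmax (insert a u) (mem_coneOf.mpr (Or.inr ⟨u, hu, rfl⟩))
        (Finset.insert_subset_insert a htu)
      have h2 : t ⊆ u := by
        intro x hx
        rcases Finset.mem_insert.mp (this ▸ Finset.mem_insert_of_mem hx :
          x ∈ insert a u) with h' | h'
        · exact absurd (h' ▸ hx) (ha _ ht)
        · exact h'
      exact Finset.Subset.antisymm h2 (by
        intro x hx
        by_contra hxt
        have hxa : x ≠ a := fun h => ha _ hu (h ▸ hx)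
        have : x ∈ insert a t := this.symm ▸ Finset.mem_insert_of_mem hx
        rcases Finset.mem_insert.mp this with h' | h'
        · exact hxa h'
        · exact hxt h')
  · rintro ⟨t, ht, rfl⟩
    rw [mem_facetsOf] at ht
    refine ⟨mem_coneOf.mpr (Or.inr ⟨t, ht.1, rfl⟩), ?_⟩
    intro u hu hsub
    rcases mem_coneOf.mp hu with h | ⟨w, hw, rfl⟩
    · exact absurd (hsub (Finset.mem_insert_self a t)) (ha _ h)
    · have htw : t ⊆ w := by
        intro x hx
        rcases Finset.mem_insert.mp (hsub (Finset.mem_insert_of_mem hx)) with h' | h'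
        · exact absurd (h' ▸ hx) (ha _ ht.1)
        · exact h'
      rw [ht.2 w hw htw]

lemma pureC_coneOf (ha : ∀ F ∈ L, a ∉ F) (hL : PureC L) : PureC (coneOf a L) := by
  intro s hs t ht
  rcases (mem_facetsOf_coneOf ha).mp hs with ⟨s', hs', rfl⟩
  rcases (mem_facetsOf_coneOf ha).mp ht with ⟨t', ht', rfl⟩
  rw [Finset.card_insert_of_notMem (ha _ (mem_facetsOf.mp hs').1),
    Finset.card_insert_of_notMem (ha _ (mem_facetsOf.mp ht').1), hL _ hs' _ ht']

end ConePow

section Verts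

variable {W : Type} [DecidableEq W] {K : Finset (Finset W)}

lemma subset_vertsOf {F : Finset W} (hF : F ∈ K) : F ⊆ vertsOf K :=
  Finset.le_sup (f := id) hF

lemma mem_vertsOf {x : W} : x ∈ vertsOf K ↔ ∃ F ∈ K, x ∈ F := by
  simp [vertsOf, Finset.mem_sup]

lemma vertsOf_linkOf_subset (v : W) : vertsOf (linkOf K v) ⊆ vertsOf K := by
  intro x hx
  rcases mem_vertsOf.mp hx with ⟨s, hs, hxs⟩
  rcases mem_linkOf.mp hs with ⟨t, ht, _, rfl⟩
  exact mem_vertsOf.mpr ⟨t, ht, (Finset.erase_subset _ _) hxs⟩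

lemma vertsOf_delOf_subset (v : W) : vertsOf (delOf K v) ⊆ vertsOf K := by
  intro x hx
  rcases mem_vertsOf.mp hx with ⟨s, hs, hxs⟩
  exact mem_vertsOf.mpr ⟨s, (mem_delOf.mp hs).1, hxs⟩

lemma vertsOf_powerset (S : Finset W) : vertsOf S.powerset = S := by
  apply Finset.Subset.antisymm
  · intro x hx
    rcases mem_vertsOf.mp hx with ⟨s, hs, hxs⟩
    exact Finset.mem_powerset.mp hs hxs
  · exact subset_vertsOf (Finset.mem_powerset_self S)

end Verts

section MapLemmas

variable {W W' : Type} [DecidableEq W] [DecidableEq W'] {f : W → W'} {K : Finset (Finset W)}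

lemma fw_mem_image (hf : Set.InjOn f ↑(vertsOf K)) {w : W} (hw : w ∈ vertsOf K)
    {t : Finset W} (ht : t ∈ K) : f w ∈ t.image f ↔ w ∈ t := by
  simp only [Finset.mem_image]
  constructor
  · rintro ⟨x, hx, hfx⟩
    rwa [← hf (subset_vertsOf ht hx) hw hfx]
  · intro h; exact ⟨w, h, rfl⟩

lemma image_erase_of_injOn (hf : Set.InjOn f ↑(vertsOf K)) {w : W} (hw : w ∈ vertsOf K)
    {t : Finset W} (ht : t ∈ K) : (t.image f).erase (f w) = (t.erase w).image f := by
  ext y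
  simp only [Finset.mem_erase, Finset.mem_image]
  constructor
  · rintro ⟨hy, x, hx, rfl⟩
    exact ⟨x, ⟨fun h => hy (h ▸ rfl), hx⟩, rfl⟩
  · rintro ⟨x, ⟨hxw, hx⟩, rfl⟩
    exact ⟨fun h => hxw (hf (subset_vertsOf ht hx) hw h), x, hx, rfl⟩

lemma image_f_subset_iff (hf : Set.InjOn f ↑(vertsOf K)) {t u : Finset W}
    (ht : t ∈ K) (hu : u ∈ K) : t.image f ⊆ u.image f ↔ t ⊆ u := by
  constructor
  · intro h x hx
    have : f x ∈ u.image f := h (Finset.mem_image_of_mem f hx)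
    rcases Finset.mem_image.mp this with ⟨y, hy, hxy⟩
    rwa [← hf (subset_vertsOf hu hy) (subset_vertsOf ht hx) hxy]
  · exact Finset.image_subset_image

lemma linkOf_mapC (hf : Set.InjOn f ↑(vertsOf K)) {w : W} (hw : w ∈ vertsOf K) :
    linkOf (mapC f K) (f w) = mapC f (linkOf K w) := by
  ext s
  rw [mem_linkOf, mem_mapC]
  constructor
  · rintro ⟨t', ht', hwt', rfl⟩
    rcases mem_mapC.mp ht' with ⟨t, ht, rfl⟩
    rw [fw_mem_image hf hw ht] at hwt'
    exact ⟨t.erase w, mem_linkOf.mpr ⟨t, ht, hwt', rfl⟩, image_erase_of_injOn hf hw ht⟩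
  · rintro ⟨u, hu, rfl⟩
    rcases mem_linkOf.mp hu with ⟨t, ht, hwt, rfl⟩
    exact ⟨t.image f, mem_mapC.mpr ⟨t, ht, rfl⟩, (fw_mem_image hf hw ht).mpr hwt,
      (image_erase_of_injOn hf hw ht).symm⟩

lemma delOf_mapC (hf : Set.InjOn f ↑(vertsOf K)) {w : W} (hw : w ∈ vertsOf K) :
    delOf (mapC f K) (f w) = mapC f (delOf K w) := by
  ext s
  rw [mem_delOf, mem_mapC]
  constructor
  · rintro ⟨ht', hwt'⟩
    rcases ht' with ⟨t, ht, rfl⟩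
    rw [fw_mem_image hf hw ht] at hwt'
    exact mem_mapC.mpr ⟨t, mem_delOf.mpr ⟨ht, hwt'⟩, rfl⟩
  · intro h
    rcases mem_mapC.mp h with ⟨t, ht, rfl⟩
    rcases mem_delOf.mp ht with ⟨htK, hwt⟩
    exact ⟨⟨t, htK, rfl⟩, fun h => hwt ((fw_mem_image hf hw htK).mp h)⟩

lemma mem_facetsOf_mapC (hf : Set.InjOn f ↑(vertsOf K)) {s : Finset W'} :
    s ∈ facetsOf (mapC f K) ↔ ∃ t ∈ facetsOf K, s = t.image f := by
  rw [mem_facetsOf]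
  constructor
  · rintro ⟨hs, hmax⟩
    rcases mem_mapC.mp hs with ⟨t, ht, rfl⟩
    refine ⟨t, mem_facetsOf.mpr ⟨ht, ?_⟩, rfl⟩
    intro u hu htu
    have := hmax (u.image f) (mem_mapC.mpr ⟨u, hu, rfl⟩) (Finset.image_subset_image htu)
    apply Finset.Subset.antisymm htu
    intro x hx
    have : f x ∈ t.image f := this ▸ Finset.mem_image_of_mem f hx
    rcases Finset.mem_image.mp this with ⟨y, hy, hxy⟩
    rwa [← hf (subset_vertsOf ht hy) (subset_vertsOf hu hx) hxy]
  · rintro ⟨t, ht, rfl⟩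
    rcases mem_facetsOf.mp ht with ⟨htK, hmax⟩
    refine ⟨mem_mapC.mpr ⟨t, htK, rfl⟩, ?_⟩
    intro u hu hsub
    rcases mem_mapC.mp hu with ⟨u', hu', rfl⟩
    rw [image_f_subset_iff hf htK hu'] at hsub
    rw [hmax u' hu' hsub]

lemma pureC_mapC (hf : Set.InjOn f ↑(vertsOf K)) (hp : PureC K) : PureC (mapC f K) := by
  intro s hs t ht
  rcases (mem_facetsOf_mapC hf).mp hs with ⟨s', hs', rfl⟩
  rcases (mem_facetsOf_mapC hf).mp ht with ⟨t', ht', rfl⟩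
  rw [Finset.card_image_of_injOn (hf.mono (Finset.coe_subset.mpr
      (subset_vertsOf (mem_facetsOf.mp hs').1))),
    Finset.card_image_of_injOn (hf.mono (Finset.coe_subset.mpr
      (subset_vertsOf (mem_facetsOf.mp ht').1)))]
  exact hp _ hs' _ ht'

lemma mapC_powerset {S : Finset W} (hf : Set.InjOn f ↑S) :
    mapC f S.powerset = (S.image f).powerset := by
  ext s
  rw [mem_mapC]
  simp only [Finset.mem_powerset]
  constructor
  · rintro ⟨t, ht, rfl⟩
    exact Finset.image_subset_image ht
  · intro h
    refine ⟨S.filter (fun x => f x ∈ s), Finset.filter_subset _ _, ?_⟩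
    ext y
    simp only [Finset.mem_image, Finset.mem_filter]
    constructor
    · intro hy
      rcases Finset.mem_image.mp (h hy) with ⟨x, hx, rfl⟩
      exact ⟨x, ⟨hx, hy⟩, rfl⟩
    · rintro ⟨x, ⟨_, hx⟩, rfl⟩
      exact hx

lemma vd_mapC {f : W → W'} {K : Finset (Finset W)} (h : VertexDecomposable K) :
    ∀ (_ : Set.InjOn f ↑(vertsOf K)), VertexDecomposable (mapC f K) := by
  induction h with
  | simplex S =>
    intro hf
    rw [vertsOf_powerset] at hf
    rw [mapC_powerset hf]
    exact VertexDecomposable.simplex _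
  | step K w hw hlp hdp hl hd ihl ihd =>
    intro hf
    have hwv : w ∈ vertsOf K := mem_vertsOf.mpr ⟨{w}, hw, Finset.mem_singleton_self w⟩
    have hfl : Set.InjOn f ↑(vertsOf (linkOf K w)) :=
      hf.mono (Finset.coe_subset.mpr (vertsOf_linkOf_subset w))
    have hfd : Set.InjOn f ↑(vertsOf (delOf K w)) :=
      hf.mono (Finset.coe_subset.mpr (vertsOf_delOf_subset w))
    refine VertexDecomposable.step _ (f w) ?_ ?_ ?_ ?_ ?_
    · exact mem_mapC.mpr ⟨{w}, hw, (Finset.image_singleton f w).symm⟩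
    · rw [linkOf_mapC hf hwv]; exact pureC_mapC hfl hlp
    · rw [delOf_mapC hf hwv]; exact pureC_mapC hfd hdp
    · rw [linkOf_mapC hf hwv]; exact ihl hfl
    · rw [delOf_mapC hf hwv]; exact ihd hfd

end MapLemmas

section SuspPure

variable {K : Finset (Finset V)} {v : V}

lemma lpart_mono {s t : Finset (V ⊕ Bool)} (h : s ⊆ t) : lpart s ⊆ lpart t := by
  intro x hx; rw [mem_lpart] at hx ⊢; exact h hx

lemma rpart_mono {s t : Finset (V ⊕ Bool)} (h : s ⊆ t) : rpart s ⊆ rpart t := by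
  intro x hx; rw [mem_rpart] at hx ⊢; exact ⟨h hx.1, hx.2⟩

@[simp] lemma rpart_rpart {s : Finset (V ⊕ Bool)} : rpart (rpart s) = rpart s := by
  ext x; simp [and_assoc]

@[simp] lemma lpart_rpart {s : Finset (V ⊕ Bool)} : lpart (rpart s) = ∅ := by
  ext x; simp

lemma card_eq_rpart_add_lpart (s : Finset (V ⊕ Bool)) :
    s.card = (rpart s).card + (lpart s).card := by
  conv_lhs => rw [← rpart_union_lpart s]
  rw [Finset.card_union_of_disjoint, Finset.card_image_of_injective _ Sum.inl_injective]
  rw [Finset.disjoint_left]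
  intro x hx hx'
  rcases Finset.mem_image.mp hx' with ⟨a, _, rfl⟩
  exact inl_notMem_rpart hx

lemma eq_of_parts {s t : Finset (V ⊕ Bool)} (hr : rpart s = rpart t)
    (hl : lpart s = lpart t) : s = t := by
  rw [← rpart_union_lpart s, ← rpart_union_lpart t, hr, hl]

lemma facet_susp_card (hK : IsComplex K) {S : Finset (V ⊕ Bool)}
    (hS : S ∈ facetsOf (susp v K)) : ∃ F ∈ facetsOf K, S.card = F.card + 1 := by
  rcases mem_facetsOf.mp hS with ⟨hSm, hSmax⟩
  rcases (mem_susp hK).mp hSm with ⟨hre, hl⟩ | ⟨hre, hlK, hlv⟩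
  · -- rpart S = eF, G := lpart S is in the link
    rcases (mem_linkOf' hK).mp hl with ⟨hvG, hFK⟩
    refine ⟨insert v (lpart S), mem_facetsOf.mpr ⟨hFK, ?_⟩, ?_⟩
    · intro H hH hFH
      have hvH : v ∈ H := hFH (Finset.mem_insert_self _ _)
      set S' : Finset (V ⊕ Bool) := eF V ∪ (H.erase v).image Sum.inl with hS'def
      have hS'm : S' ∈ susp v K := by
        rw [mem_susp hK]
        left
        constructor
        · rw [hS'def, rpart_union, rpart_eF, rpart_image_inl, Finset.union_empty]
        · rw [hS'def, lpart_union, lpart_eF, lpart_image_inl, Finset.empty_union,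
            mem_linkOf' hK]
          exact ⟨Finset.notMem_erase _ _, by rwa [Finset.insert_erase hvH]⟩
      have hsub : S ⊆ S' := by
        conv_lhs => rw [← rpart_union_lpart S]
        apply Finset.union_subset
        · rw [hre, hS'def]; exact Finset.subset_union_left
        · rw [hS'def]
          refine Finset.Subset.trans ?_ Finset.subset_union_right
          apply Finset.image_subset_image
          intro x hx
          exact Finset.mem_erase.mpr ⟨fun h => hvG (h ▸ hx),
            hFH (Finset.mem_insert_of_mem hx)⟩
      have hSeq := hSmax S' hS'm hsub
      have hlp : lpart S = H.erase v := by
        rw [hSeq, hS'def, lpart_union, lpart_eF, lpart_image_inl, Finset.empty_union]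
      rw [hlp, Finset.insert_erase hvH]
    · rw [card_eq_rpart_add_lpart S, hre, eF_card,
        Finset.card_insert_of_notMem hvG]
      omega
  · -- rpart S ≠ eF, F := lpart S ∈ K
    have hrne : rpart S ≠ ∅ := by
      intro h0
      have hfS : Sum.inr false ∉ S := by
        intro h
        have : Sum.inr false ∈ rpart S := by rw [mem_rpart]; exact ⟨h, rfl⟩
        rw [h0] at this; exact absurd this (Finset.notMem_empty _)
      have hmem : insert (Sum.inr false) S ∈ susp v K := by
        rw [mem_susp hK]
        right
        rw [rpart_insert_inr, lpart_insert_inr, h0]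
        refine ⟨?_, hlK, hlv⟩
        intro h
        have : Sum.inr true ∈ insert (Sum.inr false) (∅ : Finset (V ⊕ Bool)) := by
          rw [h]; simp [eF]
        simp at this
      have := hSmax _ hmem (Finset.subset_insert _ _)
      exact hfS (this ▸ Finset.mem_insert_self _ _)
    have hcard1 : (rpart S).card = 1 := by
      rcases subset_eF_cases (rpart_subset_eF S) with h | h | h | h
      · exact absurd h hrne
      · rw [h]; simp
      · rw [h]; simp
      · exact absurd h hre
    refine ⟨lpart S, mem_facetsOf.mpr ⟨hlK, ?_⟩, ?_⟩
    · intro H hH hFH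
      by_cases hvH : v ∈ H
      · exfalso
        set S' : Finset (V ⊕ Bool) := eF V ∪ (H.erase v).image Sum.inl with hS'def
        have hS'm : S' ∈ susp v K := by
          rw [mem_susp hK]
          left
          constructor
          · rw [hS'def, rpart_union, rpart_eF, rpart_image_inl, Finset.union_empty]
          · rw [hS'def, lpart_union, lpart_eF, lpart_image_inl, Finset.empty_union,
              mem_linkOf' hK]
            exact ⟨Finset.notMem_erase _ _, by rwa [Finset.insert_erase hvH]⟩
        have hsub : S ⊆ S' := by
          conv_lhs => rw [← rpart_union_lpart S]
          apply Finset.union_subset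
          · rw [hS'def]
            exact (rpart_subset_eF S).trans Finset.subset_union_left
          · rw [hS'def]
            refine Finset.Subset.trans ?_ Finset.subset_union_right
            apply Finset.image_subset_image
            intro x hx
            exact Finset.mem_erase.mpr ⟨fun h => hlv (h ▸ hx), hFH hx⟩
        have hSeq := hSmax S' hS'm hsub
        apply hre
        rw [hSeq, hS'def, rpart_union, rpart_eF, rpart_image_inl, Finset.union_empty]
      · set S' : Finset (V ⊕ Bool) := rpart S ∪ H.image Sum.inl with hS'def
        have hS'm : S' ∈ susp v K := by
          rw [mem_susp hK]
          right
          rw [hS'def, rpart_union, rpart_rpart, rpart_image_inl, Finset.union_empty,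
            lpart_union, lpart_rpart, lpart_image_inl, Finset.empty_union]
          exact ⟨hre, hH, hvH⟩
        have hsub : S ⊆ S' := by
          conv_lhs => rw [← rpart_union_lpart S]
          rw [hS'def]
          exact Finset.union_subset_union Finset.Subset.rfl (Finset.image_subset_image hFH)
        have hSeq := hSmax S' hS'm hsub
        rw [hSeq, hS'def, lpart_union, lpart_rpart, lpart_image_inl, Finset.empty_union]
    · rw [card_eq_rpart_add_lpart S, hcard1]
      omega

lemma facet_to_susp_card (hK : IsComplex K) {F : Finset V} (hF : F ∈ facetsOf K) :
    ∃ S ∈ facetsOf (susp v K), S.card = F.card + 1 := by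
  rcases mem_facetsOf.mp hF with ⟨hFK, hFmax⟩
  by_cases hvF : v ∈ F
  · set S : Finset (V ⊕ Bool) := eF V ∪ (F.erase v).image Sum.inl with hSdef
    have hrS : rpart S = eF V := by
      rw [hSdef, rpart_union, rpart_eF, rpart_image_inl, Finset.union_empty]
    have hlS : lpart S = F.erase v := by
      rw [hSdef, lpart_union, lpart_eF, lpart_image_inl, Finset.empty_union]
    have hSm : S ∈ susp v K := by
      rw [mem_susp hK]
      left
      rw [hrS, hlS, mem_linkOf' hK]
      exact ⟨rfl, Finset.notMem_erase _ _, by rwa [Finset.insert_erase hvF]⟩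
    refine ⟨S, mem_facetsOf.mpr ⟨hSm, ?_⟩, ?_⟩
    · intro S' hS' hsub
      have hrS' : rpart S' = eF V := by
        apply Finset.Subset.antisymm (rpart_subset_eF S')
        rw [← hrS]; exact rpart_mono hsub
      rcases (mem_susp hK).mp hS' with ⟨_, hl⟩ | ⟨hre, _, _⟩
      · rcases (mem_linkOf' hK).mp hl with ⟨hvG, hGK⟩
        have hFsub : F ⊆ insert v (lpart S') := by
          intro x hx
          by_cases hxv : x = v
          · exact hxv ▸ Finset.mem_insert_self _ _
          · apply Finset.mem_insert_of_mem
            have : x ∈ lpart S := hlS ▸ Finset.mem_erase.mpr ⟨hxv, hx⟩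
            exact lpart_mono hsub this
        have hFeq := hFmax _ hGK hFsub
        apply eq_of_parts (by rw [hrS, hrS'])
        rw [hlS, hFeq, Finset.erase_insert hvG]
      · exact absurd hrS' hre
    · rw [card_eq_rpart_add_lpart S, hrS, hlS, eF_card, Finset.card_erase_of_mem hvF]
      have : 1 ≤ F.card := Finset.card_pos.mpr ⟨v, hvF⟩
      omega
  · set S : Finset (V ⊕ Bool) := insert (Sum.inr false) (F.image Sum.inl) with hSdef
    have hrS : rpart S = {Sum.inr false} := by
      rw [hSdef, rpart_insert_inr, rpart_image_inl]
      rfl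
    have hlS : lpart S = F := by
      rw [hSdef, lpart_insert_inr, lpart_image_inl]
    have hSm : S ∈ susp v K := by
      rw [mem_susp hK]
      right
      rw [hrS, hlS]
      exact ⟨singleton_ne_eF _, hFK, hvF⟩
    refine ⟨S, mem_facetsOf.mpr ⟨hSm, ?_⟩, ?_⟩
    · intro S' hS' hsub
      rcases (mem_susp hK).mp hS' with ⟨_, hl⟩ | ⟨hre, hK', hv'⟩
      · exfalso
        rcases (mem_linkOf' hK).mp hl with ⟨hvG, hGK⟩
        have hFsub : F ⊆ insert v (lpart S') := by
          intro x hx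
          exact Finset.mem_insert_of_mem (lpart_mono hsub (hlS ▸ hx))
        have := hFmax _ hGK hFsub
        exact hvF (this ▸ Finset.mem_insert_self v _)
      · have hFeq : lpart S' = F := by
          rw [← hFmax _ hK' (by rw [← hlS]; exact lpart_mono hsub)]
        have hrS' : rpart S' = {Sum.inr false} := by
          have hfmem : Sum.inr false ∈ rpart S' := by
            apply rpart_mono hsub
            rw [hrS]; exact Finset.mem_singleton_self _
          rcases subset_eF_cases (rpart_subset_eF S') with h | h | h | h
          · rw [h] at hfmem; exact absurd hfmem (Finset.notMem_empty _)
          · exact h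
          · rw [h] at hfmem
            exact absurd (Finset.mem_singleton.mp hfmem) (by simp)
          · exact absurd h hre
        exact (eq_of_parts (by rw [hrS, hrS']) (by rw [hlS, hFeq])).symm
    · rw [card_eq_rpart_add_lpart S, hrS, hlS]
      rw [Finset.card_singleton]
      omega

lemma pureC_susp_iff (hK : IsComplex K) : PureC (susp v K) ↔ PureC K := by
  constructor
  · intro h F hF G hG
    obtain ⟨S, hS, hSc⟩ := facet_to_susp_card hK hF
    obtain ⟨T, hT, hTc⟩ := facet_to_susp_card hK hG
    have := h S hS T hT
    omega
  · intro h S hS T hT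
    obtain ⟨F, hF, hFc⟩ := facet_susp_card hK hS
    obtain ⟨G, hG, hGc⟩ := facet_susp_card hK hT
    have := h F hF G hG
    omega

end SuspPure

section Main

variable {K : Finset (Finset V)} {v : V}

@[simp] lemma rpart_singleton_inr {b : Bool} :
    rpart ({Sum.inr b} : Finset (V ⊕ Bool)) = {Sum.inr b} := by
  ext x; simp only [mem_rpart, Finset.mem_singleton]
  constructor
  · rintro ⟨rfl, -⟩; rfl
  · rintro rfl; exact ⟨rfl, rfl⟩

@[simp] lemma lpart_singleton_inr {b : Bool} :
    lpart ({Sum.inr b} : Finset (V ⊕ Bool)) = ∅ := by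
  ext x; simp

@[simp] lemma rpart_singleton_inl {w : V} :
    rpart ({Sum.inl w} : Finset (V ⊕ Bool)) = ∅ := by
  ext x; simp only [mem_rpart, Finset.mem_singleton, Finset.notMem_empty, iff_false]
  rintro ⟨rfl, h⟩; simp at h

@[simp] lemma lpart_singleton_inl {w : V} :
    lpart ({Sum.inl w} : Finset (V ⊕ Bool)) = {w} := by
  ext x; simp

lemma singleton_inr_mem_susp (hK : IsComplex K) (b : Bool) :
    ({Sum.inr b} : Finset (V ⊕ Bool)) ∈ susp v K := by
  rw [mem_susp hK]
  right
  rw [rpart_singleton_inr, lpart_singleton_inr]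
  exact ⟨singleton_ne_eF _, hK.1, Finset.notMem_empty _⟩

lemma singleton_inl_mem_susp (hK : IsComplex K) {w : V} (hw : {w} ∈ K) (hwv : w ≠ v) :
    ({Sum.inl w} : Finset (V ⊕ Bool)) ∈ susp v K := by
  rw [mem_susp hK]
  right
  rw [rpart_singleton_inl, lpart_singleton_inl]
  exact ⟨fun h => empty_ne_eF h, hw, fun h => hwv (Finset.mem_singleton.mp h).symm⟩

lemma vd_coneOf {W : Type} [DecidableEq W] {a : W} {L : Finset (Finset W)}
    (ha : ∀ F ∈ L, a ∉ F) (he : ∅ ∈ L) (hLp : PureC L) (hL : VertexDecomposable L) :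
    VertexDecomposable (coneOf a L) := by
  refine VertexDecomposable.step _ a ?_ ?_ ?_ ?_ ?_
  · exact mem_coneOf.mpr (Or.inr ⟨∅, he, by simp⟩)
  · rw [linkOf_coneOf ha]; exact hLp
  · rw [delOf_coneOf ha]; exact hLp
  · rw [linkOf_coneOf ha]; exact hL
  · rw [delOf_coneOf ha]; exact hL

lemma not_inr_mem_mapC_inl {L : Finset (Finset V)} {b : Bool} :
    ∀ F ∈ mapC Sum.inl L, Sum.inr b ∉ F := by
  intro F hF h
  rcases mem_mapC.mp hF with ⟨t, _, rfl⟩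
  rcases Finset.mem_image.mp h with ⟨x, _, hx⟩
  exact Sum.inl_ne_inr hx

lemma empty_mem_mapC_inl_delOf (hK : IsComplex K) :
    (∅ : Finset (V ⊕ Bool)) ∈ mapC Sum.inl (delOf K v) :=
  mem_mapC.mpr ⟨∅, mem_delOf.mpr ⟨hK.1, Finset.notMem_empty _⟩, by simp⟩

/-- The backward direction: `K` vertex-decomposable implies `susp v K` is. -/
lemma vd_susp {L : Finset (Finset V)} (h : VertexDecomposable L) :
    ∀ (_ : IsComplex L) (_ : PureC L), VertexDecomposable (susp v L) := by
  induction h with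
  | simplex S =>
    intro hC _
    refine VertexDecomposable.step _ (Sum.inr false) (singleton_inr_mem_susp hC false)
      ?_ ?_ ?_ ?_
    · rw [linkOf_susp_inr hC false, mapC_powerset ((fb_injective v false).injOn)]
      exact pureC_powerset _
    · rw [delOf_susp_inr hC false, delOf_powerset,
        mapC_powerset (Sum.inl_injective.injOn),
        coneOf_powerset (fun h => not_inr_mem_mapC_inl _
          (mem_mapC.mpr ⟨S.erase v, Finset.mem_powerset_self _, rfl⟩) h)]
      exact pureC_powerset _
    · rw [linkOf_susp_inr hC false, mapC_powerset ((fb_injective v false).injOn)]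
      exact VertexDecomposable.simplex _
    · rw [delOf_susp_inr hC false, delOf_powerset,
        mapC_powerset (Sum.inl_injective.injOn),
        coneOf_powerset (fun h => not_inr_mem_mapC_inl _
          (mem_mapC.mpr ⟨S.erase v, Finset.mem_powerset_self _, rfl⟩) h)]
      exact VertexDecomposable.simplex _
  | step L w hw hlp hdp hl hd ihl ihd =>
    intro hC hp
    by_cases hwv : w = v
    · subst hwv
      -- shed at the suspension vertex `inr false`
      have hfv : fb w false w = Sum.inr true := by simp [fb]
      have hwverts : w ∈ vertsOf L := mem_vertsOf.mpr ⟨{w}, hw, Finset.mem_singleton_self w⟩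
      have hinj : Set.InjOn (fb w false) ↑(vertsOf L) := (fb_injective w false).injOn
      have hvdmap : VertexDecomposable (mapC (fb w false) L) := by
        refine VertexDecomposable.step _ (Sum.inr true) ?_ ?_ ?_ ?_ ?_
        · exact mem_mapC.mpr ⟨{w}, hw, by rw [Finset.image_singleton, hfv]⟩
        · rw [← hfv, linkOf_mapC hinj hwverts]
          exact pureC_mapC (hinj.mono (Finset.coe_subset.mpr (vertsOf_linkOf_subset w))) hlp
        · rw [← hfv, delOf_mapC hinj hwverts]
          exact pureC_mapC (hinj.mono (Finset.coe_subset.mpr (vertsOf_delOf_subset w))) hdp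
        · rw [← hfv, linkOf_mapC hinj hwverts]
          exact vd_mapC hl (hinj.mono (Finset.coe_subset.mpr (vertsOf_linkOf_subset w)))
        · rw [← hfv, delOf_mapC hinj hwverts]
          exact vd_mapC hd (hinj.mono (Finset.coe_subset.mpr (vertsOf_delOf_subset w)))
      refine VertexDecomposable.step _ (Sum.inr false) (singleton_inr_mem_susp hC false)
        ?_ ?_ ?_ ?_
      · rw [linkOf_susp_inr hC false]
        exact pureC_mapC hinj hp
      · rw [delOf_susp_inr hC false]
        exact pureC_coneOf not_inr_mem_mapC_inl
          (pureC_mapC (Sum.inl_injective.injOn) hdp)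
      · rw [linkOf_susp_inr hC false]
        exact hvdmap
      · rw [delOf_susp_inr hC false]
        exact vd_coneOf not_inr_mem_mapC_inl (empty_mem_mapC_inl_delOf hC)
          (pureC_mapC (Sum.inl_injective.injOn) hdp)
          (vd_mapC hd (Sum.inl_injective.injOn))
    · -- shed at the original vertex `inl w`
      refine VertexDecomposable.step _ (Sum.inl w)
        (singleton_inl_mem_susp hC hw hwv) ?_ ?_ ?_ ?_
      · rw [linkOf_susp_inl hC hw hwv]
        exact (pureC_susp_iff (isComplex_linkOf hC hw)).mpr hlp
      · rw [delOf_susp_inl hC hw hwv]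
        exact (pureC_susp_iff (isComplex_delOf hC w)).mpr hdp
      · rw [linkOf_susp_inl hC hw hwv]
        exact ihl (isComplex_linkOf hC hw) hlp
      · rw [delOf_susp_inl hC hw hwv]
        exact ihd (isComplex_delOf hC w) hdp

end Main

section Forward

variable {v : V}

/-- The forward direction: if the suspension is vertex-decomposable, so is `K`. -/
lemma vd_of_vd_susp {M : Finset (Finset (V ⊕ Bool))} (hM : VertexDecomposable M) :
    ∀ {K : Finset (Finset V)}, IsComplex K → M = susp v K → VertexDecomposable K := by
  induction hM with
  | simplex S =>
    intro K hK hMeq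
    have hf : Sum.inr false ∈ S := by
      have h1 := singleton_inr_mem_susp (v := v) hK false
      rw [← hMeq, Finset.mem_powerset] at h1
      exact h1 (Finset.mem_singleton_self _)
    have ht : Sum.inr true ∈ S := by
      have h1 := singleton_inr_mem_susp (v := v) hK true
      rw [← hMeq, Finset.mem_powerset] at h1
      exact h1 (Finset.mem_singleton_self _)
    have hS : S ∈ susp v K := by rw [← hMeq]; exact Finset.mem_powerset_self S
    rcases (mem_susp hK).mp hS with ⟨hre, hl⟩ | ⟨hre, _, _⟩
    · -- K = (insert v (lpart S)).powerset
      have hGK : insert v (lpart S) ∈ K := ((mem_linkOf' hK).mp hl).2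
      have claim : K = (insert v (lpart S)).powerset := by
        ext F
        rw [Finset.mem_powerset]
        constructor
        · intro hF
          by_cases hvF : v ∈ F
          · have hFl : F.erase v ∈ linkOf K v := (mem_linkOf' hK).mpr
              ⟨Finset.notMem_erase _ _, by rwa [Finset.insert_erase hvF]⟩
            have hS' : eF V ∪ (F.erase v).image Sum.inl ∈ susp v K := by
              rw [mem_susp hK]
              left
              rw [rpart_union, rpart_eF, rpart_image_inl, Finset.union_empty,
                lpart_union, lpart_eF, lpart_image_inl, Finset.empty_union]
              exact ⟨rfl, hFl⟩
            rw [← hMeq, Finset.mem_powerset] at hS'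
            intro x hx
            by_cases hxv : x = v
            · exact hxv ▸ Finset.mem_insert_self _ _
            · apply Finset.mem_insert_of_mem
              rw [mem_lpart]
              apply hS'
              apply Finset.mem_union_right
              exact Finset.mem_image_of_mem _ (Finset.mem_erase.mpr ⟨hxv, hx⟩)
          · have hS' : F.image Sum.inl ∈ susp v K := by
              rw [mem_susp hK]
              right
              rw [rpart_image_inl, lpart_image_inl]
              exact ⟨fun h => empty_ne_eF h, hF, hvF⟩
            rw [← hMeq, Finset.mem_powerset] at hS'
            intro x hx
            by_cases hxv : x = v
            · exact hxv ▸ Finset.mem_insert_self _ _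
            · apply Finset.mem_insert_of_mem
              rw [mem_lpart]
              exact hS' (Finset.mem_image_of_mem _ hx)
        · intro hF
          exact hK.2 _ hGK _ hF
      rw [claim]
      exact VertexDecomposable.simplex _
    · exfalso
      apply hre
      apply Finset.Subset.antisymm (rpart_subset_eF S)
      intro x hx
      rcases Finset.mem_insert.mp hx with rfl | hx'
      · exact mem_rpart.mpr ⟨hf, rfl⟩
      · rw [Finset.mem_singleton] at hx'
        exact hx' ▸ mem_rpart.mpr ⟨ht, rfl⟩
  | step M u hu hlp hdp hl hd ihl ihd =>
    intro K hK hMeq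
    subst hMeq
    cases u with
    | inl w =>
      have hw : {w} ∈ K ∧ w ≠ v := by
        rcases (mem_susp hK).mp hu with ⟨hre, _⟩ | ⟨_, hlK, hlv⟩
        · exfalso
          rw [rpart_singleton_inl] at hre
          exact empty_ne_eF hre
        · rw [lpart_singleton_inl] at hlK hlv
          exact ⟨hlK, fun h => hlv (h ▸ Finset.mem_singleton_self _)⟩
      refine VertexDecomposable.step K w hw.1 ?_ ?_ ?_ ?_
      · rw [linkOf_susp_inl hK hw.1 hw.2] at hlp
        exact (pureC_susp_iff (isComplex_linkOf hK hw.1)).mp hlp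
      · rw [delOf_susp_inl hK hw.1 hw.2] at hdp
        exact (pureC_susp_iff (isComplex_delOf hK w)).mp hdp
      · exact ihl (isComplex_linkOf hK hw.1) (linkOf_susp_inl hK hw.1 hw.2)
      · exact ihd (isComplex_delOf hK w) (delOf_susp_inl hK hw.1 hw.2)
    | inr b =>
      rw [linkOf_susp_inr hK b] at hl
      set g : V ⊕ Bool → V := Sum.elim id (fun _ => v) with hgdef
      have hgf : ∀ x : V, g (fb v b x) = x := by
        intro x
        by_cases hxv : x = v <;> simp [fb, hgdef, hxv]
      have hcomp : mapC g (mapC (fb v b) K) = K := by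
        unfold mapC
        rw [Finset.image_image]
        have himg : ∀ F : Finset V, (Finset.image g ∘ Finset.image (fb v b)) F = F := by
          intro F
          simp only [Function.comp_apply, Finset.image_image]
          rw [show g ∘ fb v b = id from funext hgf, Finset.image_id]
        rw [show (Finset.image g ∘ Finset.image (fb v b)) = id from funext himg,
          Finset.image_id]
      have hinj : Set.InjOn g ↑(vertsOf (mapC (fb v b) K)) := by
        intro a ha b' hb' hab
        rcases mem_vertsOf.mp ha with ⟨F', hF', haF'⟩
        rcases mem_mapC.mp hF' with ⟨F, _, rfl⟩
        rcases Finset.mem_image.mp haF' with ⟨x, _, rfl⟩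
        rcases mem_vertsOf.mp hb' with ⟨G', hG', hbG'⟩
        rcases mem_mapC.mp hG' with ⟨G, _, rfl⟩
        rcases Finset.mem_image.mp hbG' with ⟨y, _, rfl⟩
        rw [hgf x, hgf y] at hab
        rw [hab]
      have hvd := vd_mapC hl hinj
      rwa [hcomp] at hvd

end Forward

/-- The one-point suspension `Susp₁(v,K)` is vertex-decomposable
if and only if `K` is vertex-decomposable. -/
theorem susp_vertexDecomposable (K : Finset (Finset V)) (v : V)
    (hK : IsComplex K) (hv : {v} ∈ K) (hp : PureC K) :
    VertexDecomposable (susp v K) ↔ VertexDecomposable K :=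
  ⟨fun h => vd_of_vd_susp h hK rfl, fun h => vd_susp h hK hp⟩
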